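/- Let η ∈ C¹([1,∞); ℝ^N) solve the repulsive system η̇_i = (γ/(2s)) Σ_{j≠i} (η_i - η_j)/|η_i - η_j|^{1+2s} with η_1(1) < ... < η_N(1) and Σ_i η_i(1) = 0, and let ξ⁰_i(t) = β_i t^{1/(1+2s)} be the self-similar solution. Then |η(t) - ξ⁰(t)| → 0 as t → +∞; in fact there exist ε > 0 and C > 0 with |η_i(t) - ξ⁰_i(t)| ≤ C t^{-ε} for all t > 1. -/

import Mathlib

open Real Finset Filter Topology

section Aux

lemma rpow_neg_anti {a b e : ℝ} (ha : 0 < a) (hab : a ≤ b) (he : 0 ≤ e) :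
    b ^ (-e) ≤ a ^ (-e) := by
  rw [Real.rpow_neg (le_of_lt (lt_of_lt_of_le ha hab)), Real.rpow_neg ha.le]
  have h1 : 0 < a ^ e := Real.rpow_pos_of_pos ha e
  have h2 : a ^ e ≤ b ^ e := Real.rpow_le_rpow ha.le hab he
  exact inv_anti₀ h1 h2

lemma rpow_neg_anti_strict {a b e : ℝ} (ha : 0 < a) (hab : a < b) (he : 0 < e) :
    b ^ (-e) < a ^ (-e) := by
  rw [Real.rpow_neg (ha.trans hab).le, Real.rpow_neg ha.le]
  have h1 : 0 < a ^ e := Real.rpow_pos_of_pos ha e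
  have h2 : a ^ e < b ^ e := Real.rpow_lt_rpow ha.le hab he
  exact inv_strictAnti₀ h1 h2

lemma div_abs_rpow_of_pos {s d : ℝ} (hd : 0 < d) :
    d / |d| ^ (1 + 2*s) = d ^ (-(2*s)) := by
  rw [abs_of_pos hd]
  rw [show -(2*s) = 1 - (1+2*s) by ring, Real.rpow_sub hd, Real.rpow_one]

lemma psi_neg (s d : ℝ) : (-d)/|(-d)|^(1+2*s) = -(d/|d|^(1+2*s)) := by
  rw [abs_neg, neg_div]

lemma pair_core_lt {s M a b : ℝ} (hs : 0 < s) (hb : 0 < b) (hba : b < a) (haM : a ≤ M) :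
    (a-b) * (a^(-(2*s)) - b^(-(2*s))) ≤ -((2*s) * M^(-(1+2*s))) * (a-b)^2 := by
  have ha : 0 < a := hb.trans hba
  have hM : 0 < M := ha.trans_le haM
  obtain ⟨c, hc, hc'⟩ := exists_hasDerivAt_eq_slope (fun x => x ^ (-(2*s)))
    (fun x => (-(2*s)) * x ^ (-(2*s) - 1)) hba
    (by
      apply ContinuousOn.rpow_const (continuousOn_id)
      intro x hx
      exact Or.inl (ne_of_gt (lt_of_lt_of_le hb hx.1)))
    (fun x hx => Real.hasDerivAt_rpow_const (Or.inl (ne_of_gt (hb.trans hx.1))))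
  have hcpos : 0 < c := hb.trans hc.1
  have hab : a - b ≠ 0 := sub_ne_zero.mpr (ne_of_gt hba)
  have key : a^(-(2*s)) - b^(-(2*s)) = (-(2*s)) * c ^ (-(2*s)-1) * (a - b) := by
    have h := hc'.symm
    rw [div_eq_iff hab] at h
    exact h
  have hcM : c ^ (-(1+2*s)) ≥ M ^ (-(1+2*s)) :=
    rpow_neg_anti hcpos (le_trans hc.2.le haM) (by linarith)
  have hexp : (-(2*s) - 1) = -(1+2*s) := by ring
  rw [key, hexp]
  have h1 : (a - b) * ((-(2*s)) * c ^ (-(1+2*s)) * (a-b))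
      = -((2*s) * c ^ (-(1+2*s))) * (a-b)^2 := by ring
  rw [h1]
  have h2 : 0 ≤ (a-b)^2 := sq_nonneg _
  have h3 : (2*s) * M^(-(1+2*s)) ≤ (2*s) * c^(-(1+2*s)) := by nlinarith
  nlinarith [mul_le_mul_of_nonneg_right h3 h2]

lemma pair_core {s M a b : ℝ} (hs : 0 < s) (ha : 0 < a) (hb : 0 < b) (haM : a ≤ M)
    (hbM : b ≤ M) :
    (a-b) * (a^(-(2*s)) - b^(-(2*s))) ≤ -((2*s) * M^(-(1+2*s))) * (a-b)^2 := by
  rcases lt_trichotomy a b with h | h | h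
  · have := pair_core_lt hs ha h hbM
    calc (a-b) * (a^(-(2*s)) - b^(-(2*s))) = (b-a) * (b^(-(2*s)) - a^(-(2*s))) := by ring
    _ ≤ -((2*s) * M^(-(1+2*s))) * (b-a)^2 := this
    _ = -((2*s) * M^(-(1+2*s))) * (a-b)^2 := by ring
  · subst h; simp
  · exact pair_core_lt hs hb h haM

lemma sum_erase_antisymm {N : ℕ} (g : Fin N → Fin N → ℝ) (hg : ∀ i j, g i j = - g j i) :
    ∑ i, ∑ j ∈ Finset.univ.erase i, g i j = 0 := by
  have hdiag : ∀ i, g i i = 0 := fun i => by have := hg i i; linarith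
  have h1 : ∀ i : Fin N, ∑ j ∈ Finset.univ.erase i, g i j = ∑ j, g i j := by
    intro i
    rw [Finset.sum_erase_eq_sub (Finset.mem_univ i), hdiag, sub_zero]
  simp_rw [h1]
  have h2 : ∑ i : Fin N, ∑ j, g i j = ∑ j : Fin N, ∑ i, g i j := Finset.sum_comm
  have h3 : ∑ j : Fin N, ∑ i : Fin N, g i j = - ∑ i : Fin N, ∑ j, g i j := by
    rw [← Finset.sum_neg_distrib]
    apply Finset.sum_congr rfl
    intro j _
    rw [← Finset.sum_neg_distrib]
    apply Finset.sum_congr rfl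
    intro i _
    exact hg i j
  linarith [h2, h3]

lemma sum_pair_sym {N : ℕ} (w : Fin N → ℝ) (Δ : Fin N → Fin N → ℝ)
    (hΔ : ∀ i j, Δ i j = -Δ j i) :
    2 * (∑ i, w i * ∑ j ∈ Finset.univ.erase i, Δ i j) = ∑ i, ∑ j, (w i - w j) * Δ i j := by
  have hdiag : ∀ i, Δ i i = 0 := fun i => by have := hΔ i i; linarith
  have h1 : ∀ i : Fin N, ∑ j ∈ Finset.univ.erase i, Δ i j = ∑ j, Δ i j := by
    intro i
    rw [Finset.sum_erase_eq_sub (Finset.mem_univ i), hdiag, sub_zero]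
  simp_rw [h1]
  have expand : ∀ i j : Fin N, (w i - w j) * Δ i j = w i * Δ i j - w j * Δ i j := by
    intros; ring
  simp_rw [expand, Finset.sum_sub_distrib]
  have hA : ∑ i : Fin N, ∑ j, w j * Δ i j = - ∑ i : Fin N, ∑ j, w i * Δ i j := by
    rw [Finset.sum_comm]
    rw [← Finset.sum_neg_distrib]
    apply Finset.sum_congr rfl; intro j _
    rw [← Finset.sum_neg_distrib]
    apply Finset.sum_congr rfl; intro i _
    rw [hΔ i j]; ring
  have : ∀ i : Fin N, w i * ∑ j, Δ i j = ∑ j, w i * Δ i j := fun i => Finset.mul_sum _ _ _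
  simp_rw [this]
  linarith [hA]

lemma sum_sq_diff {N : ℕ} (w : Fin N → ℝ) :
    ∑ i, ∑ j, (w i - w j)^2 = 2*N*(∑ i, (w i)^2) - 2*(∑ i, w i)^2 := by
  have expand : ∀ i j : Fin N, (w i - w j)^2 = (w i)^2 - 2*(w i * w j) + (w j)^2 := by
    intros; ring
  simp_rw [expand, Finset.sum_add_distrib, Finset.sum_sub_distrib]
  have h1 : ∑ _i : Fin N, ∑ _j : Fin N, 1 = (N:ℝ) * N := by
    simp [Finset.sum_const, Finset.card_univ]
  have ha : ∑ i : Fin N, ∑ _j : Fin N, (w i)^2 = (N:ℝ) * ∑ i, (w i)^2 := by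
    simp [Finset.sum_const, Finset.card_univ, Finset.mul_sum, mul_comm]
  have hb : ∑ _i : Fin N, ∑ j : Fin N, (w j)^2 = (N:ℝ) * ∑ i, (w i)^2 := by
    simp [Finset.sum_const, Finset.card_univ]
  have hc : ∑ i : Fin N, ∑ j : Fin N, 2*(w i * w j) = 2*(∑ i, w i)^2 := by
    have : ∑ i : Fin N, ∑ j : Fin N, 2*(w i * w j)
        = 2 * ((∑ i, w i) * (∑ j, w j)) := by
      rw [Finset.sum_mul_sum, Finset.mul_sum]
      apply Finset.sum_congr rfl; intro i _
      rw [Finset.mul_sum]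
    rw [this, sq]
  rw [ha, hb, hc]
  ring

lemma psi_abs_le {s m d : ℝ} (hs : 0 ≤ s) (hm : 0 < m) (hmd : m ≤ |d|) :
    |d / |d|^(1+2*s)| ≤ m^(-(2*s)) := by
  have hd : 0 < |d| := lt_of_lt_of_le hm hmd
  have h1 : |d / |d|^(1+2*s)| = |d| / |d|^(1+2*s) := by
    rw [abs_div, abs_of_nonneg (Real.rpow_nonneg (abs_nonneg d) _)]
  have h2 : |d| / |d|^(1+2*s) = |d|^(-(2*s)) := by
    have := div_abs_rpow_of_pos (s := s) (d := |d|) hd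
    rwa [abs_abs] at this
  rw [h1, h2]
  exact rpow_neg_anti hm hmd (by linarith)

lemma pair_psi {s M a b : ℝ} (hs : 0 < s) (ha : 0 < a) (hb : 0 < b) (haM : a ≤ M)
    (hbM : b ≤ M) :
    (a - b) * (a/|a|^(1+2*s) - b/|b|^(1+2*s)) ≤ -((2*s)*M^(-(1+2*s))) * (a-b)^2 := by
  rw [div_abs_rpow_of_pos ha, div_abs_rpow_of_pos hb]
  exact pair_core hs ha hb haM hbM

lemma antitoneOn_Ici_of_hasDerivAt {f f' : ℝ → ℝ} {a : ℝ}
    (hcont : ContinuousOn f (Set.Ici a))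
    (hd : ∀ t ∈ Set.Ioi a, HasDerivAt f (f' t) t)
    (h0 : ∀ t ∈ Set.Ioi a, f' t ≤ 0) : AntitoneOn f (Set.Ici a) := by
  apply antitoneOn_of_deriv_nonpos (convex_Ici a) hcont
  · intro t ht
    rw [interior_Ici] at ht
    exact ((hd t ht).differentiableAt).differentiableWithinAt
  · intro t ht
    rw [interior_Ici] at ht
    rw [(hd t ht).deriv]
    exact h0 t ht

lemma constant_on_Ici {f : ℝ → ℝ} {a : ℝ} (hcont : ContinuousOn f (Set.Ici a))
    (hd : ∀ t ∈ Set.Ioi a, HasDerivAt f 0 t) : ∀ t ∈ Set.Ici a, f t = f a := by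
  have h1 : AntitoneOn f (Set.Ici a) :=
    antitoneOn_Ici_of_hasDerivAt hcont (f' := fun _ => 0) hd (fun t _ => le_refl 0)
  have h2 : MonotoneOn f (Set.Ici a) := by
    apply monotoneOn_of_deriv_nonneg (convex_Ici a) hcont
    · intro t ht
      rw [interior_Ici] at ht
      exact ((hd t ht).differentiableAt).differentiableWithinAt
    · intro t ht
      rw [interior_Ici] at ht
      rw [(hd t ht).deriv]
  intro t ht
  exact le_antisymm (h1 Set.self_mem_Ici ht ht) (h2 Set.self_mem_Ici ht ht)

end Aux

set_option maxHeartbeats 1600000 in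
theorem stmt_5 (N : ℕ) (hN : 2 ≤ N) (s γ : ℝ) (hs0 : 0 < s) (hs1 : s < 1) (hγ : 0 < γ)
    (η : Fin N → ℝ → ℝ)
    (hC1 : ∀ i, ContinuousOn (η i) (Set.Ici 1) ∧ ContinuousOn (deriv (η i)) (Set.Ici 1))
    (hode : ∀ i : Fin N, ∀ t > (1:ℝ), HasDerivAt (η i)
      ((γ / (2*s)) * ∑ j ∈ Finset.univ.erase i,
        (η i t - η j t) / |η i t - η j t| ^ (1 + 2*s)) t)
    (hinit : StrictMono (fun i => η i 1))
    (hbary : (∑ i, η i 1) = 0)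
    (β : Fin N → ℝ) (hβ : StrictMono β)
    (hβeq : ∀ i, β i = ((1 + 2*s) * γ / (2*s)) *
      ∑ j ∈ Finset.univ.erase i, (β i - β j) / |β i - β j| ^ (1 + 2*s))
    (ξ : Fin N → ℝ → ℝ) (hξ : ∀ i t, ξ i t = β i * t ^ (1/(1 + 2*s))) :
    Tendsto (fun t : ℝ => Real.sqrt (∑ i, (η i t - ξ i t) ^ 2)) atTop (𝓝 0) ∧
    ∃ ε > (0:ℝ), ∃ C > (0:ℝ), ∀ t > (1:ℝ), ∀ i : Fin N,
      |η i t - ξ i t| ≤ C * t ^ (-ε) := by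
  have h2s : (0:ℝ) < 2*s := by linarith
  have h12s : (0:ℝ) < 1+2*s := by linarith
  set c : ℝ := γ/(2*s) with hcdef
  have hc : 0 < c := div_pos hγ h2s
  set α : ℝ := 1/(1+2*s) with hαdef
  have hα0 : 0 < α := by positivity
  have hα1 : α * (1+2*s) = 1 := one_div_mul_cancel (ne_of_gt h12s)
  have hξfun : ∀ i, ξ i = fun t => β i * t ^ α := fun i => funext (hξ i)
  -- continuity of ξ and η
  have hηcont : ∀ i, ContinuousOn (η i) (Set.Ici 1) := fun i => (hC1 i).1
  have hξcont : ∀ i, ContinuousOn (ξ i) (Set.Ici 1) := by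
    intro i
    rw [hξfun i]
    apply ContinuousOn.mul continuousOn_const
    apply ContinuousOn.rpow_const continuousOn_id
    intro t ht
    exact Or.inl (ne_of_gt (lt_of_lt_of_le one_pos ht))
  have hβanti : ∀ i j : Fin N, (β i - β j) / |β i - β j| ^ (1 + 2*s)
      = -((β j - β i) / |β j - β i| ^ (1 + 2*s)) := by
    intro i j
    rw [show β i - β j = -(β j - β i) by ring]
    exact psi_neg s (β j - β i)
  -- sum of β is zero
  have hβsum : (∑ i, β i) = 0 := by
    have hz : ∑ i, ∑ j ∈ Finset.univ.erase i, (β i - β j) / |β i - β j| ^ (1 + 2*s) = 0 :=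
      sum_erase_antisymm _ hβanti
    calc (∑ i, β i) = ∑ i, ((1 + 2*s) * γ / (2*s)) *
        ∑ j ∈ Finset.univ.erase i, (β i - β j) / |β i - β j| ^ (1 + 2*s) :=
          Finset.sum_congr rfl (fun i _ => hβeq i)
      _ = ((1 + 2*s) * γ / (2*s)) *
          ∑ i, ∑ j ∈ Finset.univ.erase i, (β i - β j) / |β i - β j| ^ (1 + 2*s) :=
          (Finset.mul_sum _ _ _).symm
      _ = 0 := by rw [hz, mul_zero]
  -- ξ derivative: solves the same ODE for t > 0
  have hξode : ∀ (i : Fin N), ∀ t > (0:ℝ), HasDerivAt (ξ i)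
      (c * ∑ j ∈ Finset.univ.erase i,
        (ξ i t - ξ j t) / |ξ i t - ξ j t| ^ (1 + 2*s)) t := by
    intro i t ht
    have htα : 0 < t ^ α := Real.rpow_pos_of_pos ht α
    have hne : ∀ j ∈ Finset.univ.erase i, β i - β j ≠ 0 := by
      intro j hj
      exact sub_ne_zero.mpr (fun h => (Finset.mem_erase.mp hj).1 (hβ.injective h.symm))
    have hQ : ∀ j, (ξ i t - ξ j t) / |ξ i t - ξ j t| ^ (1 + 2*s)
        = ((β i - β j) / |β i - β j| ^ (1 + 2*s)) * (t^α / t) := by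
      intro j
      rw [hξ i t, hξ j t]
      have h1 : β i * t^α - β j * t^α = (β i - β j) * t^α := by ring
      rw [h1, abs_mul, abs_of_pos htα, Real.mul_rpow (abs_nonneg _) htα.le]
      have h2 : (t^α)^(1+2*s) = t := by
        rw [← Real.rpow_mul ht.le, hα1, Real.rpow_one]
      rw [h2]
      exact mul_div_mul_comm _ _ _ _
    have hsum : (∑ j ∈ Finset.univ.erase i,
        (ξ i t - ξ j t) / |ξ i t - ξ j t| ^ (1 + 2*s))
        = (∑ j ∈ Finset.univ.erase i, (β i - β j) / |β i - β j| ^ (1 + 2*s)) * (t^α / t) := by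
      rw [Finset.sum_mul]
      exact Finset.sum_congr rfl (fun j _ => hQ j)
    have hval : c * ∑ j ∈ Finset.univ.erase i,
        (ξ i t - ξ j t) / |ξ i t - ξ j t| ^ (1 + 2*s) = β i * (α * t^(α-1)) := by
      rw [hsum]
      have hB := hβeq i
      set Bs := ∑ j ∈ Finset.univ.erase i, (β i - β j) / |β i - β j| ^ (1 + 2*s) with hBs
      rw [hB]
      have ht1 : t^α / t = t^(α-1) := by
        rw [Real.rpow_sub ht, Real.rpow_one]
      rw [ht1, hcdef, hαdef]
      field_simp
    rw [hval, hξfun i]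
    exact (Real.hasDerivAt_rpow_const (Or.inl (ne_of_gt ht))).const_mul (β i)
  -- conservation of the barycenter
  have hsum0 : ∀ t ∈ Set.Ici (1:ℝ), (∑ i, η i t) = 0 := by
    have hScont : ContinuousOn (fun u => ∑ i, η i u) (Set.Ici 1) :=
      continuousOn_finset_sum _ (fun i _ => hηcont i)
    have hSd : ∀ t ∈ Set.Ioi (1:ℝ), HasDerivAt (fun u => ∑ i, η i u) 0 t := by
      intro t ht
      have h := HasDerivAt.fun_sum (fun i (_ : i ∈ Finset.univ) => hode i t ht)
      have hz : ∑ i, c * (∑ j ∈ Finset.univ.erase i,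
          (η i t - η j t) / |η i t - η j t| ^ (1 + 2*s)) = 0 := by
        rw [← Finset.mul_sum]
        rw [sum_erase_antisymm (fun i j => (η i t - η j t) / |η i t - η j t| ^ (1 + 2*s))]
        · ring
        · intro i j
          rw [show η i t - η j t = -(η j t - η i t) by ring]
          exact psi_neg s (η j t - η i t)
      rw [← hz]
      exact h
    intro t ht
    have := constant_on_Ici hScont hSd t ht
    rw [this, hbary]
  have horder : ∀ t ∈ Set.Ici (1:ℝ), StrictMono (fun i => η i t) := by
    by_contra hcon
    push_neg at hcon
    obtain ⟨t₀, ht₀, hbad₀⟩ := hcon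
    set Sbad : Set ℝ := {t | t ∈ Set.Ici (1:ℝ) ∧ ¬ StrictMono (fun i => η i t)} with hSdef
    have hSne : Sbad.Nonempty := ⟨t₀, ht₀, hbad₀⟩
    have hSbdd : BddBelow Sbad := ⟨1, fun t htS => htS.1⟩
    have hSclosed : IsClosed Sbad := by
      have hrw : Sbad = ⋃ p : Fin N × Fin N,
          {t | p.1 < p.2 ∧ (t ∈ Set.Ici (1:ℝ) ∧ η p.2 t ≤ η p.1 t)} := by
        ext t
        simp only [hSdef, Set.mem_iUnion, Set.mem_setOf_eq]
        constructor
        · rintro ⟨ht1, hns⟩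
          rw [StrictMono] at hns
          push_neg at hns
          obtain ⟨i, j, hij, hle⟩ := hns
          exact ⟨(i, j), hij, ht1, hle⟩
        · rintro ⟨p, hp, ht1, hle⟩
          exact ⟨ht1, fun hsm => absurd hle (not_le.mpr (hsm hp))⟩
      rw [hrw]
      apply isClosed_iUnion_of_finite
      intro pp
      by_cases hp : pp.1 < pp.2
      · have hset : {t | pp.1 < pp.2 ∧ (t ∈ Set.Ici (1:ℝ) ∧ η pp.2 t ≤ η pp.1 t)}
            = Set.Ici (1:ℝ) ∩ (fun t => η pp.2 t - η pp.1 t) ⁻¹' (Set.Iic 0) := by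
          ext t
          simp only [Set.mem_setOf_eq, Set.mem_inter_iff, Set.mem_preimage, Set.mem_Iic]
          constructor
          · rintro ⟨_, h1, h2⟩; exact ⟨h1, by linarith⟩
          · rintro ⟨h1, h2⟩; exact ⟨hp, h1, by linarith⟩
        rw [hset]
        exact ContinuousOn.preimage_isClosed_of_isClosed
          ((hηcont pp.2).sub (hηcont pp.1)) isClosed_Ici isClosed_Iic
      · have hset : {t | pp.1 < pp.2 ∧ (t ∈ Set.Ici (1:ℝ) ∧ η pp.2 t ≤ η pp.1 t)} = ∅ := by
          ext t; simp [hp]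
        rw [hset]
        exact isClosed_empty
    set tc : ℝ := sInf Sbad with htcdef
    have htcS : tc ∈ Sbad := hSclosed.csInf_mem hSne hSbdd
    have htc1 : 1 ≤ tc := htcS.1
    have htc1' : 1 < tc := by
      rcases lt_or_eq_of_le htc1 with h | h
      · exact h
      · exact absurd (h ▸ hinit) htcS.2
    have hord_lt : ∀ u, 1 ≤ u → u < tc → StrictMono (fun i => η i u) := by
      intro u hu1 hutc
      by_contra hns
      exact absurd (csInf_le hSbdd ⟨hu1, hns⟩) (not_le.mpr hutc)
    -- limits from the left
    have hIoo_mem : Set.Ioo 1 tc ∈ 𝓝[<] tc :=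
      Ioo_mem_nhdsLT_of_mem ⟨htc1', le_refl tc⟩
    have hle_filter : 𝓝[<] tc ≤ 𝓝[Set.Ici (1:ℝ)] tc :=
      nhdsWithin_le_of_mem (mem_of_superset hIoo_mem (fun z hz => le_of_lt hz.1))
    have htendk : ∀ k : Fin N, Tendsto (η k) (𝓝[<] tc) (𝓝 (η k tc)) := fun k =>
      ((hηcont k).continuousWithinAt (Set.mem_Ici.mpr htc1)).mono_left hle_filter
    have hevIoo : ∀ᶠ t in 𝓝[<] tc, t ∈ Set.Ioo 1 tc := hIoo_mem
    -- weak ordering at tc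
    have hweak : ∀ i j : Fin N, i < j → η i tc ≤ η j tc := by
      intro i j hij
      have h1 : Tendsto (fun z => η j z - η i z) (𝓝[<] tc) (𝓝 (η j tc - η i tc)) :=
        (htendk j).sub (htendk i)
      have h2 : ∀ᶠ z in 𝓝[<] tc, 0 ≤ η j z - η i z := by
        filter_upwards [hevIoo] with z hz
        exact le_of_lt (sub_pos.mpr (hord_lt z (le_of_lt hz.1) hz.2 hij))
      linarith [ge_of_tendsto h1 h2]
    obtain ⟨i₀, j₀, hij₀, heq₀⟩ : ∃ i j : Fin N, i < j ∧ η i tc = η j tc := by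
      have hns := htcS.2
      rw [StrictMono] at hns
      push_neg at hns
      obtain ⟨i, j, hij, hle⟩ := hns
      exact ⟨i, j, hij, le_antisymm (hweak i j hij) hle⟩
    -- the colliding block
    set v : ℝ := η i₀ tc with hvdef
    set B : Finset (Fin N) := Finset.univ.filter (fun k => η k tc = v) with hBdef
    have hi₀B : i₀ ∈ B := by simp [hBdef]; exact hvdef.symm
    have hj₀B : j₀ ∈ B := by
      simp only [hBdef, Finset.mem_filter, Finset.mem_univ, true_and]
      exact heq₀.symm
    have hBne : B.Nonempty := ⟨i₀, hi₀B⟩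
    set p : Fin N := B.min' hBne with hpdef
    set q : Fin N := B.max' hBne with hqdef
    have hpB : p ∈ B := B.min'_mem hBne
    have hqB : q ∈ B := B.max'_mem hBne
    have hxp : η p tc = v := (Finset.mem_filter.mp hpB).2
    have hxq : η q tc = v := (Finset.mem_filter.mp hqB).2
    have hpq : p < q :=
      lt_of_le_of_lt (B.min'_le i₀ hi₀B) (lt_of_lt_of_le hij₀ (B.le_max' j₀ hj₀B))
    -- separation from particles outside the block
    set Bc : Finset (Fin N) := Finset.univ.filter (fun k => η k tc ≠ v) with hBcdef
    set δ : ℝ := if hBc : Bc.Nonempty then Bc.inf' hBc (fun k => |η k tc - v|) else 1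
      with hδdef
    have hδ0 : 0 < δ := by
      rw [hδdef]
      split_ifs with h
      · rw [Finset.lt_inf'_iff]
        intro k hk
        exact abs_pos.mpr (sub_ne_zero.mpr (Finset.mem_filter.mp hk).2)
      · norm_num
    have hδk : ∀ k, k ∉ B → δ ≤ |η k tc - v| := by
      intro k hk
      have hk' : k ∈ Bc := by
        simp only [hBcdef, Finset.mem_filter, Finset.mem_univ, true_and]
        intro h
        exact hk (by simp [hBdef, h])
      rw [hδdef]
      split_ifs with h
      · exact Finset.inf'_le _ hk'
      · exact absurd ⟨k, hk'⟩ h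
    -- the threshold
    set m : ℝ := (δ/2)^(-(2*s)) with hmdef
    have hm0 : 0 ≤ m := Real.rpow_nonneg (by positivity : (0:ℝ) ≤ δ/2) _
    set W : ℝ := (N:ℝ)*m + 1 with hWdef
    have hW0 : 0 < W := by
      have hN0 : (0:ℝ) ≤ N := Nat.cast_nonneg N
      nlinarith
    set ε₀ : ℝ := W^(-(1/(2*s))) with hε₀def
    have hε₀0 : 0 < ε₀ := Real.rpow_pos_of_pos hW0 _
    have hε₀W : ε₀^(-(2*s)) = W := by
      rw [hε₀def, ← Real.rpow_mul hW0.le]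
      rw [show (-(1/(2*s))) * (-(2*s)) = 1 by field_simp]
      exact Real.rpow_one W
    set u : ℝ → ℝ := fun z => η q z - η p z with hudef
    have hutc : u tc = 0 := by
      simp only [hudef]
      rw [hxq, hxp, sub_self]
    -- eventual conditions to the left of tc
    have hev2 : ∀ᶠ z in 𝓝[<] tc, u z < ε₀ := by
      have h1 : Tendsto u (𝓝[<] tc) (𝓝 0) := by
        rw [← hutc]
        exact (htendk q).sub (htendk p)
      exact h1.eventually (eventually_of_mem (Iio_mem_nhds hε₀0) (fun y hy => hy))
    have hev3 : ∀ᶠ z in 𝓝[<] tc, ∀ k, k ∉ B →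
        δ/2 < |η k z - η q z| ∧ δ/2 < |η k z - η p z| := by
      rw [Filter.eventually_all]
      intro k
      by_cases hk : k ∈ B
      · filter_upwards with z hz
        exact absurd hk hz
      · have hq1 : Tendsto (fun z => |η k z - η q z|) (𝓝[<] tc) (𝓝 (|η k tc - η q tc|)) :=
          ((htendk k).sub (htendk q)).abs
        have hp1 : Tendsto (fun z => |η k z - η p z|) (𝓝[<] tc) (𝓝 (|η k tc - η p tc|)) :=
          ((htendk k).sub (htendk p)).abs
        have hq2 : δ/2 < |η k tc - η q tc| := by
          rw [hxq]
          have := hδk k hk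
          linarith
        have hp2 : δ/2 < |η k tc - η p tc| := by
          rw [hxp]
          have := hδk k hk
          linarith
        have e1 := hq1.eventually (eventually_of_mem (Ioi_mem_nhds hq2) (fun y hy => hy))
        have e2 := hp1.eventually (eventually_of_mem (Ioi_mem_nhds hp2) (fun y hy => hy))
        filter_upwards [e1, e2] with z h1 h2 _
        exact ⟨h1, h2⟩
    have hevall := hevIoo.and (hev2.and hev3)
    obtain ⟨l, hl, hsub⟩ := (mem_nhdsLT_iff_exists_Ioo_subset' htc1').mp hevall
    set t₁ : ℝ := (max l 1 + tc)/2 with ht₁def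
    have hmax : max l 1 < tc := max_lt hl htc1'
    have h1t₁ : 1 < t₁ := by
      have := le_max_right l 1
      rw [ht₁def]; linarith
    have hlt₁ : l < t₁ := by
      have := le_max_left l 1
      rw [ht₁def]; linarith
    have ht₁tc : t₁ < tc := by rw [ht₁def]; linarith
    have hPt : ∀ z, t₁ ≤ z → z < tc → z ∈ Set.Ioo 1 tc ∧ u z < ε₀ ∧
        ∀ k, k ∉ B → δ/2 < |η k z - η q z| ∧ δ/2 < |η k z - η p z| :=
      fun z h1 h2 => hsub ⟨lt_of_lt_of_le hlt₁ h1, h2⟩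
    -- u is strictly increasing on [t₁, tc]
    have hucont : ContinuousOn u (Set.Icc t₁ tc) :=
      ((hηcont q).sub (hηcont p)).mono (fun z hz => le_trans (le_of_lt h1t₁) hz.1)
    have hderiv_pos : ∀ z ∈ interior (Set.Icc t₁ tc), 0 < deriv u z := by
      rw [interior_Icc]
      intro z hz
      have hz1 : (1:ℝ) < z := lt_trans h1t₁ hz.1
      have hcond := hPt z (le_of_lt hz.1) hz.2
      have hym : StrictMono (fun k => η k z) := hord_lt z (le_of_lt hz1) hz.2
      have hdz : HasDerivAt u
          ((c * ∑ k ∈ Finset.univ.erase q, (η q z - η k z) / |η q z - η k z| ^ (1 + 2*s))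
          - (c * ∑ k ∈ Finset.univ.erase p, (η p z - η k z) / |η p z - η k z| ^ (1 + 2*s))) z :=
        (hode q z hz1).sub (hode p z hz1)
      rw [hdz.deriv]
      -- positivity of the force difference
      have hupos : 0 < u z := sub_pos.mpr (hym hpq)
      have huW : W < (u z)^(-(2*s)) := by
        rw [← hε₀W]
        exact rpow_neg_anti_strict hupos hcond.2.1 h2s
      have hsplitq : Finset.univ.erase q = (B.erase q) ∪ (Finset.univ \ B) := by
        ext k
        simp only [Finset.mem_erase, Finset.mem_union, Finset.mem_sdiff, Finset.mem_univ,
          true_and, and_true]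
        constructor
        · intro hk
          by_cases hkB : k ∈ B
          · exact Or.inl ⟨hk, hkB⟩
          · exact Or.inr hkB
        · rintro (⟨hk, _⟩ | hkB)
          · exact hk
          · intro h; rw [h] at hkB; exact hkB hqB
      have hsplitp : Finset.univ.erase p = (B.erase p) ∪ (Finset.univ \ B) := by
        ext k
        simp only [Finset.mem_erase, Finset.mem_union, Finset.mem_sdiff, Finset.mem_univ,
          true_and, and_true]
        constructor
        · intro hk
          by_cases hkB : k ∈ B
          · exact Or.inl ⟨hk, hkB⟩
          · exact Or.inr hkB
        · rintro (⟨hk, _⟩ | hkB)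
          · exact hk
          · intro h; rw [h] at hkB; exact hkB hpB
      have hdisjq : Disjoint (B.erase q) (Finset.univ \ B) := by
        rw [Finset.disjoint_left]
        intro k hk hk2
        exact (Finset.mem_sdiff.mp hk2).2 (Finset.mem_of_mem_erase hk)
      have hdisjp : Disjoint (B.erase p) (Finset.univ \ B) := by
        rw [Finset.disjoint_left]
        intro k hk hk2
        exact (Finset.mem_sdiff.mp hk2).2 (Finset.mem_of_mem_erase hk)
      have hcardB : ((Finset.univ \ B).card : ℝ) ≤ (N:ℝ) := by
        have := Finset.card_le_univ (Finset.univ \ B)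
        rw [Fintype.card_fin] at this
        exact_mod_cast this
      -- bounds on the q-sum
      have hq_in : (u z)^(-(2*s)) ≤
          ∑ k ∈ B.erase q, (η q z - η k z) / |η q z - η k z| ^ (1 + 2*s) := by
        have hp_mem : p ∈ B.erase q := Finset.mem_erase.mpr ⟨ne_of_lt hpq, hpB⟩
        have hval : (η q z - η p z) / |η q z - η p z| ^ (1 + 2*s) = (u z)^(-(2*s)) :=
          div_abs_rpow_of_pos hupos
        rw [← hval]
        refine Finset.single_le_sum
          (f := fun k => (η q z - η k z) / |η q z - η k z| ^ (1 + 2*s)) ?_ hp_mem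
        intro k hk
        have hkq : k < q := lt_of_le_of_ne (B.le_max' k (Finset.mem_of_mem_erase hk))
          (Finset.mem_erase.mp hk).1
        have hpos : 0 < η q z - η k z := sub_pos.mpr (hym hkq)
        show 0 ≤ (η q z - η k z) / |η q z - η k z| ^ (1 + 2*s)
        exact div_nonneg hpos.le (Real.rpow_nonneg (abs_nonneg _) _)
      have hq_out : -((N:ℝ)*m) ≤
          ∑ k ∈ Finset.univ \ B, (η q z - η k z) / |η q z - η k z| ^ (1 + 2*s) := by
        have hterm : ∀ k ∈ Finset.univ \ B,
            -m ≤ (η q z - η k z) / |η q z - η k z| ^ (1 + 2*s) := by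
          intro k hk
          have hkB : k ∉ B := (Finset.mem_sdiff.mp hk).2
          have h1 : δ/2 < |η k z - η q z| := (hcond.2.2 k hkB).1
          have h2 : δ/2 ≤ |η q z - η k z| := by
            rw [abs_sub_comm]; linarith
          have h3 := psi_abs_le (le_of_lt hs0) (by linarith : (0:ℝ) < δ/2) h2
          have h4 := neg_abs_le ((η q z - η k z) / |η q z - η k z| ^ (1 + 2*s))
          rw [hmdef]
          linarith
        have h5 := Finset.card_nsmul_le_sum (Finset.univ \ B) _ _ hterm
        rw [nsmul_eq_mul] at h5
        have : -((N:ℝ)*m) ≤ ((Finset.univ \ B).card : ℝ) * (-m) := by nlinarith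
        linarith
      -- bounds on the p-sum
      have hp_in : ∑ k ∈ B.erase p, (η p z - η k z) / |η p z - η k z| ^ (1 + 2*s)
          ≤ -((u z)^(-(2*s))) := by
        have hq_mem : q ∈ B.erase p := Finset.mem_erase.mpr ⟨(ne_of_lt hpq).symm, hqB⟩
        have hneg : ∑ k ∈ B.erase p, (η p z - η k z) / |η p z - η k z| ^ (1 + 2*s)
            = -(∑ k ∈ B.erase p, -((η p z - η k z) / |η p z - η k z| ^ (1 + 2*s))) := by
          rw [Finset.sum_neg_distrib, neg_neg]
        rw [hneg, neg_le_neg_iff]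
        have hval : -((η p z - η q z) / |η p z - η q z| ^ (1 + 2*s)) = (u z)^(-(2*s)) := by
          rw [show η p z - η q z = -(η q z - η p z) by ring, psi_neg, neg_neg]
          exact div_abs_rpow_of_pos hupos
        rw [← hval]
        refine Finset.single_le_sum
          (f := fun k => -((η p z - η k z) / |η p z - η k z| ^ (1 + 2*s))) ?_ hq_mem
        intro k hk
        have hpk : p < k := lt_of_le_of_ne (B.min'_le k (Finset.mem_of_mem_erase hk))
          (Ne.symm (Finset.mem_erase.mp hk).1)
        have hpos : 0 < η k z - η p z := sub_pos.mpr (hym hpk)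
        show 0 ≤ -((η p z - η k z) / |η p z - η k z| ^ (1 + 2*s))
        rw [show η p z - η k z = -(η k z - η p z) by ring, psi_neg, neg_neg]
        exact div_nonneg hpos.le (Real.rpow_nonneg (abs_nonneg _) _)
      have hp_out : ∑ k ∈ Finset.univ \ B, (η p z - η k z) / |η p z - η k z| ^ (1 + 2*s)
          ≤ (N:ℝ)*m := by
        have hterm : ∀ k ∈ Finset.univ \ B,
            (η p z - η k z) / |η p z - η k z| ^ (1 + 2*s) ≤ m := by
          intro k hk
          have hkB : k ∉ B := (Finset.mem_sdiff.mp hk).2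
          have h1 : δ/2 < |η k z - η p z| := (hcond.2.2 k hkB).2
          have h2 : δ/2 ≤ |η p z - η k z| := by
            rw [abs_sub_comm]; linarith
          have h3 := psi_abs_le (le_of_lt hs0) (by linarith : (0:ℝ) < δ/2) h2
          have h4 := le_abs_self ((η p z - η k z) / |η p z - η k z| ^ (1 + 2*s))
          rw [hmdef]
          linarith
        have h5 := Finset.sum_le_card_nsmul (Finset.univ \ B) _ _ hterm
        rw [nsmul_eq_mul] at h5
        have : ((Finset.univ \ B).card : ℝ) * m ≤ (N:ℝ)*m := by nlinarith
        linarith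
      -- assemble
      rw [hsplitq, Finset.sum_union hdisjq, hsplitp, Finset.sum_union hdisjp]
      have hNm : (N:ℝ)*m + 1 ≤ (u z)^(-(2*s)) := by
        rw [← hWdef]
        linarith
      have hA : (u z)^(-(2*s)) - (N:ℝ)*m ≤
          (∑ k ∈ B.erase q, (η q z - η k z) / |η q z - η k z| ^ (1 + 2*s))
          + ∑ k ∈ Finset.univ \ B, (η q z - η k z) / |η q z - η k z| ^ (1 + 2*s) := by
        linarith
      have hB2 : (∑ k ∈ B.erase p, (η p z - η k z) / |η p z - η k z| ^ (1 + 2*s))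
          + (∑ k ∈ Finset.univ \ B, (η p z - η k z) / |η p z - η k z| ^ (1 + 2*s))
          ≤ -((u z)^(-(2*s))) + (N:ℝ)*m := by
        linarith
      have hdiff : 2 ≤ ((∑ k ∈ B.erase q, (η q z - η k z) / |η q z - η k z| ^ (1 + 2*s))
          + ∑ k ∈ Finset.univ \ B, (η q z - η k z) / |η q z - η k z| ^ (1 + 2*s))
          - ((∑ k ∈ B.erase p, (η p z - η k z) / |η p z - η k z| ^ (1 + 2*s))
          + ∑ k ∈ Finset.univ \ B, (η p z - η k z) / |η p z - η k z| ^ (1 + 2*s)) := by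
        linarith
      have hmul := mul_le_mul_of_nonneg_left hdiff hc.le
      have hpos : 0 < c * 2 := by positivity
      linarith
    have hmono : StrictMonoOn u (Set.Icc t₁ tc) :=
      strictMonoOn_of_deriv_pos (convex_Icc t₁ tc) hucont hderiv_pos
    have h5 : u t₁ < u tc :=
      hmono (Set.mem_Icc.mpr ⟨le_refl t₁, le_of_lt ht₁tc⟩)
        (Set.mem_Icc.mpr ⟨le_of_lt ht₁tc, le_refl tc⟩) ht₁tc
    have h6 : 0 < u t₁ :=
      sub_pos.mpr ((hord_lt t₁ (le_of_lt h1t₁) ht₁tc) hpq)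
    rw [hutc] at h5
    linarith
  -- the squared distance
  set D : ℝ → ℝ := fun t => ∑ i, (η i t - ξ i t)^2 with hDdef
  have hDcont : ContinuousOn D (Set.Ici 1) := by
    apply continuousOn_finset_sum
    intro i _
    exact ((hηcont i).sub (hξcont i)).pow 2
  have hDnonneg : ∀ t, 0 ≤ D t := fun t => Finset.sum_nonneg fun i _ => sq_nonneg _
  set D' : ℝ → ℝ := fun t => c * ∑ i, ∑ j,
      ((η i t - ξ i t) - (η j t - ξ j t)) *
        ((η i t - η j t) / |η i t - η j t| ^ (1 + 2*s)
          - (ξ i t - ξ j t) / |ξ i t - ξ j t| ^ (1 + 2*s)) with hD'def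
  have hwsum : ∀ t ∈ Set.Ici (1:ℝ), ∑ i, (η i t - ξ i t) = 0 := by
    intro t ht
    rw [Finset.sum_sub_distrib, hsum0 t ht]
    simp_rw [hξ]
    rw [← Finset.sum_mul, hβsum]
    ring
  have hξord : ∀ t, 0 < t → ∀ i j : Fin N, j < i → 0 < ξ i t - ξ j t := by
    intro t ht i j hij
    rw [hξ i t, hξ j t]
    have h1 : β j < β i := hβ hij
    have h2 : 0 < t ^ (1/(1+2*s)) := Real.rpow_pos_of_pos ht _
    nlinarith
  have hηord : ∀ t, 1 ≤ t → ∀ i j : Fin N, j < i → 0 < η i t - η j t := by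
    intro t ht i j hij
    exact sub_pos.mpr (horder t ht hij)
  have hDderiv : ∀ t ∈ Set.Ioi (1:ℝ), HasDerivAt D (D' t) t := by
    intro t ht
    have ht0 : (0:ℝ) < t := lt_trans one_pos ht
    have h := HasDerivAt.fun_sum (u := Finset.univ)
      (fun i (_ : i ∈ Finset.univ) => ((hode i t ht).fun_sub (hξode i t ht0)).fun_pow 2)
    refine h.congr_deriv (Eq.symm ?_)
    have hΔ : ∀ i j : Fin N, ((η i t - η j t) / |η i t - η j t| ^ (1 + 2*s)
          - (ξ i t - ξ j t) / |ξ i t - ξ j t| ^ (1 + 2*s))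
        = -((η j t - η i t) / |η j t - η i t| ^ (1 + 2*s)
          - (ξ j t - ξ i t) / |ξ j t - ξ i t| ^ (1 + 2*s)) := by
      intro i j
      rw [show η i t - η j t = -(η j t - η i t) by ring,
          show ξ i t - ξ j t = -(ξ j t - ξ i t) by ring,
          psi_neg, psi_neg]
      ring
    have h2 := sum_pair_sym (fun i => η i t - ξ i t)
      (fun i j => (η i t - η j t) / |η i t - η j t| ^ (1 + 2*s)
          - (ξ i t - ξ j t) / |ξ i t - ξ j t| ^ (1 + 2*s)) hΔ
    rw [hD'def]
    dsimp only
    rw [← h2]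
    have e1 : ∀ i : Fin N, ((2:ℕ):ℝ) * (η i t - ξ i t)^(2-1) *
        ((c * ∑ j ∈ Finset.univ.erase i, (η i t - η j t) / |η i t - η j t| ^ (1 + 2*s))
         - c * ∑ j ∈ Finset.univ.erase i, (ξ i t - ξ j t) / |ξ i t - ξ j t| ^ (1 + 2*s))
        = c * 2 * ((η i t - ξ i t) * ∑ j ∈ Finset.univ.erase i,
            ((η i t - η j t) / |η i t - η j t| ^ (1 + 2*s)
              - (ξ i t - ξ j t) / |ξ i t - ξ j t| ^ (1 + 2*s))) := by
      intro i
      rw [← mul_sub, ← Finset.sum_sub_distrib]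
      norm_num
      ring
    calc c * (2 * ∑ i, (η i t - ξ i t) * ∑ j ∈ Finset.univ.erase i,
            ((η i t - η j t) / |η i t - η j t| ^ (1 + 2*s)
              - (ξ i t - ξ j t) / |ξ i t - ξ j t| ^ (1 + 2*s)))
        = ∑ i, c * 2 * ((η i t - ξ i t) * ∑ j ∈ Finset.univ.erase i,
            ((η i t - η j t) / |η i t - η j t| ^ (1 + 2*s)
              - (ξ i t - ξ j t) / |ξ i t - ξ j t| ^ (1 + 2*s))) := by
          rw [← mul_assoc, Finset.mul_sum]
      _ = ∑ i, ((2:ℕ):ℝ) * (η i t - ξ i t)^(2-1) *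
        ((c * ∑ j ∈ Finset.univ.erase i, (η i t - η j t) / |η i t - η j t| ^ (1 + 2*s))
         - c * ∑ j ∈ Finset.univ.erase i, (ξ i t - ξ j t) / |ξ i t - ξ j t| ^ (1 + 2*s)) :=
          Finset.sum_congr rfl (fun i _ => (e1 i).symm)
  -- a generic quantitative bound on D'
  have hD'bound : ∀ t ∈ Set.Ioi (1:ℝ), ∀ M' : ℝ, 0 < M' →
      (∀ i j : Fin N, j < i → η i t - η j t ≤ M' ∧ ξ i t - ξ j t ≤ M') →
      D' t ≤ -(c * (2*s*M'^(-(1+2*s))) * (2*N)) * D t := by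
    intro t ht M' hM' hgap
    have ht1 : (1:ℝ) ≤ t := le_of_lt ht
    have ht0 : (0:ℝ) < t := lt_trans one_pos ht
    have hterm : ∀ i j : Fin N,
        ((η i t - ξ i t) - (η j t - ξ j t)) *
          ((η i t - η j t) / |η i t - η j t| ^ (1 + 2*s)
            - (ξ i t - ξ j t) / |ξ i t - ξ j t| ^ (1 + 2*s))
        ≤ -((2*s)*M'^(-(1+2*s))) * (((η i t - ξ i t) - (η j t - ξ j t)))^2 := by
      intro i j
      rcases lt_trichotomy j i with hij | hij | hij
      · have key := pair_psi (M := M') hs0 (hηord t ht1 i j hij) (hξord t ht0 i j hij)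
          (hgap i j hij).1 (hgap i j hij).2
        calc ((η i t - ξ i t) - (η j t - ξ j t)) *
              ((η i t - η j t) / |η i t - η j t| ^ (1 + 2*s)
                - (ξ i t - ξ j t) / |ξ i t - ξ j t| ^ (1 + 2*s))
            = ((η i t - η j t) - (ξ i t - ξ j t)) *
              ((η i t - η j t) / |η i t - η j t| ^ (1 + 2*s)
                - (ξ i t - ξ j t) / |ξ i t - ξ j t| ^ (1 + 2*s)) := by ring
          _ ≤ -((2*s)*M'^(-(1+2*s))) * ((η i t - η j t) - (ξ i t - ξ j t))^2 := key
          _ = -((2*s)*M'^(-(1+2*s))) * (((η i t - ξ i t) - (η j t - ξ j t)))^2 := by ring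
      · subst hij
        simp
      · have key := pair_psi (M := M') hs0 (hηord t ht1 j i hij) (hξord t ht0 j i hij)
          (hgap j i hij).1 (hgap j i hij).2
        calc ((η i t - ξ i t) - (η j t - ξ j t)) *
              ((η i t - η j t) / |η i t - η j t| ^ (1 + 2*s)
                - (ξ i t - ξ j t) / |ξ i t - ξ j t| ^ (1 + 2*s))
            = ((η j t - η i t) - (ξ j t - ξ i t)) *
              ((η j t - η i t) / |η j t - η i t| ^ (1 + 2*s)
                - (ξ j t - ξ i t) / |ξ j t - ξ i t| ^ (1 + 2*s)) := by
              rw [show η i t - η j t = -(η j t - η i t) by ring,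
                  show ξ i t - ξ j t = -(ξ j t - ξ i t) by ring,
                  psi_neg, psi_neg]
              ring
          _ ≤ -((2*s)*M'^(-(1+2*s))) * ((η j t - η i t) - (ξ j t - ξ i t))^2 := key
          _ = -((2*s)*M'^(-(1+2*s))) * (((η i t - ξ i t) - (η j t - ξ j t)))^2 := by ring
    have hsum_le : ∑ i, ∑ j,
        ((η i t - ξ i t) - (η j t - ξ j t)) *
          ((η i t - η j t) / |η i t - η j t| ^ (1 + 2*s)
            - (ξ i t - ξ j t) / |ξ i t - ξ j t| ^ (1 + 2*s))
        ≤ ∑ i, ∑ j, -((2*s)*M'^(-(1+2*s))) *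
            (((η i t - ξ i t) - (η j t - ξ j t)))^2 :=
      Finset.sum_le_sum (fun i _ => Finset.sum_le_sum (fun j _ => hterm i j))
    have hsq := sum_sq_diff (fun i => η i t - ξ i t)
    have hw0 := hwsum t (Set.mem_Ici.mpr ht1)
    have hrhs : ∑ i, ∑ j, -((2*s)*M'^(-(1+2*s))) *
            (((η i t - ξ i t) - (η j t - ξ j t)))^2
        = -((2*s)*M'^(-(1+2*s))) * (2*N* D t) := by
      have pull : ∀ (A : Fin N → Fin N → ℝ) (r : ℝ),
          (∑ i, ∑ j, r * A i j) = r * ∑ i, ∑ j, A i j := by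
        intro A r
        rw [Finset.mul_sum]
        exact Finset.sum_congr rfl fun i _ => (Finset.mul_sum _ _ _).symm
      rw [pull (fun i j => (((η i t - ξ i t) - (η j t - ξ j t)))^2) (-((2*s)*M'^(-(1+2*s))))]
      rw [hsq, hw0, hDdef]
      ring
    rw [hD'def]
    dsimp only
    calc c * ∑ i, ∑ j,
        ((η i t - ξ i t) - (η j t - ξ j t)) *
          ((η i t - η j t) / |η i t - η j t| ^ (1 + 2*s)
            - (ξ i t - ξ j t) / |ξ i t - ξ j t| ^ (1 + 2*s))
        ≤ c * (-((2*s)*M'^(-(1+2*s))) * (2*N* D t)) := by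
          apply mul_le_mul_of_nonneg_left _ hc.le
          rw [← hrhs]
          exact hsum_le
      _ = -(c * (2*s*M'^(-(1+2*s))) * (2*N)) * D t := by ring
  -- stage 1: D is non-increasing
  have hD'le0 : ∀ t ∈ Set.Ioi (1:ℝ), D' t ≤ 0 := by
    intro t ht
    set M' : ℝ := 2*(∑ k, |η k t|) + 2*(∑ k, |ξ k t|) + 1 with hM'def
    have habs : ∀ f : Fin N → ℝ, ∀ i : Fin N, |f i| ≤ ∑ k, |f k| := by
      intro f i
      exact Finset.single_le_sum (f := fun k => |f k|) (fun k _ => abs_nonneg _)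
        (Finset.mem_univ i)
    have hM'pos : 0 < M' := by
      have h1 : 0 ≤ ∑ k, |η k t| := Finset.sum_nonneg fun k _ => abs_nonneg _
      have h2 : 0 ≤ ∑ k, |ξ k t| := Finset.sum_nonneg fun k _ => abs_nonneg _
      positivity
    have hgap : ∀ i j : Fin N, j < i → η i t - η j t ≤ M' ∧ ξ i t - ξ j t ≤ M' := by
      intro i j _
      constructor
      · have := habs (fun k => η k t) i
        have := habs (fun k => η k t) j
        have hi := abs_le.mp (habs (fun k => η k t) i)
        have hj := abs_le.mp (habs (fun k => η k t) j)
        have h2 : 0 ≤ ∑ k, |ξ k t| := Finset.sum_nonneg fun k _ => abs_nonneg _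
        rw [hM'def]; linarith [hi.2, hj.1]
      · have hi := abs_le.mp (habs (fun k => ξ k t) i)
        have hj := abs_le.mp (habs (fun k => ξ k t) j)
        have h1 : 0 ≤ ∑ k, |η k t| := Finset.sum_nonneg fun k _ => abs_nonneg _
        rw [hM'def]; linarith [hi.2, hj.1]
    have := hD'bound t ht M' hM'pos hgap
    have hfac : 0 ≤ c * (2*s*M'^(-(1+2*s))) * (2*N) := by
      have := Real.rpow_pos_of_pos hM'pos (-(1+2*s))
      positivity
    nlinarith [hDnonneg t]
  have hDanti : AntitoneOn D (Set.Ici 1) :=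
    antitoneOn_Ici_of_hasDerivAt hDcont hDderiv hD'le0
  set R : ℝ := Real.sqrt (D 1) with hRdef
  have hR0 : 0 ≤ R := Real.sqrt_nonneg _
  have hwR : ∀ t ∈ Set.Ici (1:ℝ), ∀ i, |η i t - ξ i t| ≤ R := by
    intro t ht i
    have h1 : (η i t - ξ i t)^2 ≤ D t :=
      Finset.single_le_sum (f := fun i => (η i t - ξ i t)^2) (fun j _ => sq_nonneg _)
        (Finset.mem_univ i)
    have h2 : D t ≤ D 1 := hDanti Set.self_mem_Ici ht ht
    rw [← Real.sqrt_sq_eq_abs, hRdef]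
    exact Real.sqrt_le_sqrt (by linarith)
  set M : ℝ := 2*(∑ i, |β i|) + 2*R + 1 with hMdef
  have hM0 : 0 < M := by positivity
  set κ : ℝ := 2*γ*(N:ℝ)*M^(-(1+2*s)) with hκdef
  have hκ0 : 0 < κ := by
    have : (0:ℝ) < N := by exact_mod_cast lt_of_lt_of_le (by norm_num) hN
    have := Real.rpow_pos_of_pos hM0 (-(1+2*s))
    positivity
  -- stage 2: quantitative decay
  have hD'leq : ∀ t ∈ Set.Ioi (1:ℝ), D' t ≤ -(κ * t^(-(1:ℝ))) * D t := by
    intro t ht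
    have ht0 : (0:ℝ) < t := lt_trans one_pos ht
    have ht1 : (1:ℝ) ≤ t := le_of_lt ht
    have htα : 0 < t ^ α := Real.rpow_pos_of_pos ht0 α
    have htα1 : 1 ≤ t ^ α := by
      calc (1:ℝ) = 1 ^ α := (Real.one_rpow α).symm
        _ ≤ t ^ α := Real.rpow_le_rpow (by norm_num) ht1 hα0.le
    have hβabs : ∀ i j : Fin N, β i - β j ≤ 2*(∑ k, |β k|) := by
      intro i j
      have hi := abs_le.mp (Finset.single_le_sum (f := fun k => |β k|)
        (fun k _ => abs_nonneg _) (Finset.mem_univ i))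
      have hj := abs_le.mp (Finset.single_le_sum (f := fun k => |β k|)
        (fun k _ => abs_nonneg _) (Finset.mem_univ j))
      linarith [hi.2, hj.1]
    have hgap : ∀ i j : Fin N, j < i → η i t - η j t ≤ M * t^α ∧ ξ i t - ξ j t ≤ M * t^α := by
      intro i j _
      have hξgap : ξ i t - ξ j t ≤ 2*(∑ k, |β k|) * t^α := by
        rw [hξ i t, hξ j t]
        have := hβabs i j
        nlinarith
      have hRi := abs_le.mp (hwR t (Set.mem_Ici.mpr ht1) i)
      have hRj := abs_le.mp (hwR t (Set.mem_Ici.mpr ht1) j)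
      have hsb : 0 ≤ ∑ k, |β k| := Finset.sum_nonneg fun k _ => abs_nonneg _
      have harith : ∀ Sb Rv T : ℝ, 0 ≤ Sb → 0 ≤ Rv → 1 ≤ T →
          2*Sb*T + 2*Rv ≤ (2*Sb+2*Rv+1)*T ∧ 2*Sb*T ≤ (2*Sb+2*Rv+1)*T := by
        intro Sb Rv T h1 h2 h3
        constructor <;> nlinarith
      have h2 := harith (∑ k, |β k|) R (t^α) hsb hR0 htα1
      rw [hMdef]
      constructor
      · have h3 : η i t - η j t ≤ (ξ i t - ξ j t) + 2*R := by linarith [hRi.2, hRj.1]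
        linarith [h2.1]
      · linarith [h2.2]
    have hMα : 0 < M * t^α := by positivity
    have := hD'bound t ht (M * t^α) hMα hgap
    have hconv : (M * t^α)^(-(1+2*s)) = M^(-(1+2*s)) * t^(-(1:ℝ)) := by
      rw [Real.mul_rpow hM0.le htα.le]
      congr 1
      rw [← Real.rpow_mul ht0.le]
      congr 1
      have : α * (1+2*s) = 1 := hα1
      nlinarith
    rw [hconv] at this
    calc D' t ≤ -(c * (2*s*(M^(-(1+2*s)) * t^(-(1:ℝ)))) * (2*N)) * D t := this
      _ = -(κ * t^(-(1:ℝ))) * D t := by rw [hκdef, hcdef]; field_simp [ne_of_gt h2s]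
  have hDdecay : ∀ t ∈ Set.Ici (1:ℝ), D t ≤ D 1 * t^(-κ) := by
    set G : ℝ → ℝ := fun u => u^κ * D u with hGdef
    have hGcont : ContinuousOn G (Set.Ici 1) := by
      apply ContinuousOn.mul _ hDcont
      apply ContinuousOn.rpow_const continuousOn_id
      intro x hx
      exact Or.inl (ne_of_gt (lt_of_lt_of_le one_pos hx))
    have hGd : ∀ t ∈ Set.Ioi (1:ℝ), HasDerivAt G (κ * t^(κ-1) * D t + t^κ * D' t) t := by
      intro t ht
      have ht0 : (0:ℝ) < t := lt_trans one_pos ht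
      exact (Real.hasDerivAt_rpow_const (p := κ) (Or.inl (ne_of_gt ht0))).mul (hDderiv t ht)
    have hGd0 : ∀ t ∈ Set.Ioi (1:ℝ), κ * t^(κ-1) * D t + t^κ * D' t ≤ 0 := by
      intro t ht
      have ht0 : (0:ℝ) < t := lt_trans one_pos ht
      have h1 : t^κ * D' t ≤ t^κ * (-(κ * t^(-(1:ℝ))) * D t) :=
        mul_le_mul_of_nonneg_left (hD'leq t ht) (Real.rpow_nonneg ht0.le κ)
      have h2 : t^(κ-1) = t^κ * t^(-(1:ℝ)) := by
        rw [← Real.rpow_add ht0, sub_eq_add_neg]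
      rw [h2]
      linarith [h1]
    have hGanti : AntitoneOn G (Set.Ici 1) :=
      antitoneOn_Ici_of_hasDerivAt hGcont hGd hGd0
    intro t ht
    have ht0 : (0:ℝ) < t := lt_of_lt_of_le one_pos ht
    have htκ : 0 < t^κ := Real.rpow_pos_of_pos ht0 κ
    have h1 : t^κ * D t ≤ D 1 := by
      have h := hGanti Set.self_mem_Ici ht ht
      simpa [hGdef, Real.one_rpow] using h
    have h2 : t^(-κ) = (t^κ)⁻¹ := Real.rpow_neg ht0.le κ
    rw [h2, ← div_eq_mul_inv, le_div_iff₀ htκ]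
    linarith [h1]
  have hfinal : ∀ t, 1 < t → Real.sqrt (D t) ≤ (R+1) * t^(-(κ/2)) := by
    intro t ht
    have ht0 : (0:ℝ) < t := lt_trans one_pos ht
    have h1 : Real.sqrt (D t) ≤ Real.sqrt (D 1 * t^(-κ)) :=
      Real.sqrt_le_sqrt (hDdecay t (le_of_lt ht))
    have h2 : Real.sqrt (D 1 * t^(-κ)) = R * Real.sqrt (t^(-κ)) := by
      rw [hRdef, Real.sqrt_mul (hDnonneg 1)]
    have h3 : Real.sqrt (t^(-κ)) = t^(-(κ/2)) := by
      rw [Real.sqrt_eq_rpow, ← Real.rpow_mul ht0.le]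
      congr 1
      ring
    have h4 : 0 ≤ t^(-(κ/2)) := Real.rpow_nonneg ht0.le _
    calc Real.sqrt (D t) ≤ R * Real.sqrt (t^(-κ)) := by rw [← h2]; exact h1
      _ = R * t^(-(κ/2)) := by rw [h3]
      _ ≤ (R+1) * t^(-(κ/2)) := mul_le_mul_of_nonneg_right (by linarith) h4
  constructor
  · apply squeeze_zero' (g := fun t => (R+1) * t^(-(κ/2)))
    · filter_upwards with t using Real.sqrt_nonneg _
    · filter_upwards [eventually_gt_atTop 1] with t ht using hfinal t ht
    · have h1 : Tendsto (fun t : ℝ => t ^ (-(κ/2))) atTop (𝓝 0) :=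
        tendsto_rpow_neg_atTop (by positivity)
      have := h1.const_mul (R+1)
      simpa using this
  · refine ⟨κ/2, by positivity, R+1, by positivity, fun t ht i => ?_⟩
    have h1 : |η i t - ξ i t| ≤ Real.sqrt (D t) := by
      rw [← Real.sqrt_sq_eq_abs]
      apply Real.sqrt_le_sqrt
      exact Finset.single_le_sum (f := fun i => (η i t - ξ i t)^2)
        (fun j _ => sq_nonneg _) (Finset.mem_univ i)
    exact h1.trans (hfinal t ht)
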